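/- If a random vector X is positively orthant dependent, then the random vector U following its checkerboard copula is positively orthant dependent. -/

import Mathlib

/-!
Write `U i = G i (V i) (X i)` with `G i t x = (1 - t) Fm i x + t F i x`. For each fixed
`t ∈ [0,1]^d` the maps `G i (t i)` are nondecreasing, and POD is preserved by coordinatewise
nondecreasing maps: their sublevel and superlevel sets are lower and upper sets of `ℝ`, i.e.
pointwise limits of half-lines, so the POD inequalities pass to them by dominated convergence.
Since `V` is independent of `X` with independent coordinates, both sides of each POD inequality
for `U` are averages over `V` of the corresponding quantities for fixed `t`: the product of the
marginal averages is the average of the product, and the inequality integrates.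
-/

open MeasureTheory ProbabilityTheory

/-- Positive orthant dependence (POD). -/
def IsPOD {Ω : Type*} [MeasurableSpace Ω] (P : Measure Ω) {d : ℕ}
    (X : Fin d → Ω → ℝ) : Prop :=
  ∀ x : Fin d → ℝ,
    (∏ i, P {ω | X i ω ≤ x i}) ≤ P {ω | ∀ i, X i ω ≤ x i} ∧
    (∏ i, P {ω | x i < X i ω}) ≤ P {ω | ∀ i, x i < X i ω}

open Filter Topology Set

theorem IsLowerSet.exists_seq_eventually_le_iff {A : Set ℝ} (hA : IsLowerSet A) :
    ∃ c : ℕ → ℝ, ∀ x, ∀ᶠ n in atTop, x ≤ c n ↔ x ∈ A := by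
  rcases A.eq_empty_or_nonempty with rfl | hne
  · refine ⟨fun n => -n, fun x => ?_⟩
    filter_upwards [tendsto_natCast_atTop_atTop.eventually_gt_atTop (-x)] with n hn
    simp only [mem_empty_iff_false, iff_false, not_le]
    linarith
  by_cases hbdd : BddAbove A
  swap
  · refine ⟨fun n => n, fun x => ?_⟩
    filter_upwards [tendsto_natCast_atTop_atTop.eventually_ge_atTop x] with n hn
    obtain ⟨a, ha, hxa⟩ := not_bddAbove_iff.1 hbdd x
    exact iff_of_true hn (hA hxa.le ha)
  by_cases hs : sSup A ∈ A
  · exact ⟨fun _ => sSup A, fun x => Eventually.of_forall fun _ =>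
      ⟨fun h => hA h hs, fun h => le_csSup hbdd h⟩⟩
  · have hA_eq : ∀ x, x ∈ A ↔ x < sSup A := fun x =>
      ⟨fun h => (le_csSup hbdd h).lt_of_ne (by rintro rfl; exact hs h),
        fun h => let ⟨a, ha, hxa⟩ := exists_lt_of_lt_csSup hne h; hA hxa.le ha⟩
    have hc : Tendsto (fun n : ℕ => sSup A - 1 / ((n : ℝ) + 1)) atTop (𝓝 (sSup A)) := by
      simpa using tendsto_one_div_add_atTop_nhds_zero_nat.const_sub (sSup A)
    refine ⟨fun n => sSup A - 1 / ((n : ℝ) + 1), fun x => ?_⟩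
    rw [hA_eq]
    by_cases hx : x < sSup A
    · filter_upwards [hc.eventually (lt_mem_nhds hx)] with n hn
      exact iff_of_true hn.le hx
    · refine Eventually.of_forall fun n => iff_of_false (fun h => hx (h.trans_lt ?_)) hx
      have : (0 : ℝ) < 1 / ((n : ℝ) + 1) := by positivity
      linarith

theorem prod_measure_le_of_eventually_mem_iff {Ω ι α : Type*} [MeasurableSpace Ω]
    [MeasurableSpace α] [Fintype ι] {P : Measure Ω} [IsFiniteMeasure P] {X : ι → Ω → α}
    (hX : ∀ i, Measurable (X i)) {S : ι → ℕ → Set α} (hS : ∀ i n, MeasurableSet (S i n))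
    {A : ι → Set α} (hlim : ∀ i x, ∀ᶠ n in atTop, x ∈ S i n ↔ x ∈ A i)
    (h : ∀ n, ∏ i, P {ω | X i ω ∈ S i n} ≤ P {ω | ∀ i, X i ω ∈ S i n}) :
    ∏ i, P {ω | X i ω ∈ A i} ≤ P {ω | ∀ i, X i ω ∈ A i} := by
  have hSm : ∀ i n, MeasurableSet {ω | X i ω ∈ S i n} := fun i n => hX i (hS i n)
  refine le_of_tendsto_of_tendsto' (ENNReal.tendsto_finsetProd_of_ne_top _
    (fun i _ => tendsto_measure_of_tendsto_indicator_of_isFiniteMeasure atTop P (hSm i)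
      fun ω => hlim i (X i ω)) fun i _ => measure_ne_top P _)
    (tendsto_measure_of_tendsto_indicator_of_isFiniteMeasure atTop P
      (fun n => by simpa only [ofPred_forall] using MeasurableSet.iInter fun i => hSm i n)
      fun ω => ?_) h
  filter_upwards [eventually_all.2 fun i => hlim i (X i ω)] with n hn
  exact forall_congr' hn

theorem IsPOD.comp_monotone {Ω : Type*} [MeasurableSpace Ω] {P : Measure Ω} [IsFiniteMeasure P]
    {d : ℕ} {X : Fin d → Ω → ℝ} (hPOD : IsPOD P X) (hX : ∀ i, Measurable (X i))
    {g : Fin d → ℝ → ℝ} (hg : ∀ i, Monotone (g i)) :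
    IsPOD P fun i ω => g i (X i ω) := by
  intro u
  constructor
  · have hlower : ∀ i, IsLowerSet {y | g i y ≤ u i} := fun i _ _ hyz hz => (hg i hyz).trans hz
    choose c hc using fun i => (hlower i).exists_seq_eventually_le_iff
    exact prod_measure_le_of_eventually_mem_iff hX (fun _ _ => measurableSet_Iic) hc
      fun n => (hPOD fun i => c i n).1
  · have hupper : ∀ i, IsUpperSet {y | u i < g i y} := fun i _ _ hyz hy => hy.trans_le (hg i hyz)
    choose c hc using fun i => (hupper i).compl.exists_seq_eventually_le_iff
    refine prod_measure_le_of_eventually_mem_iff (A := fun i => {y | u i < g i y}) hX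
      (fun _ _ => measurableSet_Ioi)
      (fun i y => (hc i y).mono fun n hn => ?_) fun n => (hPOD fun i => c i n).2
    rw [mem_Ioi, ← not_le, hn, mem_compl_iff, not_not]

section

variable {Ω ι α β : Type*} [MeasurableSpace Ω] [MeasurableSpace α] [MeasurableSpace β]
  {P : Measure Ω}

theorem ProbabilityTheory.IndepFun.measure_prodMk_mem_eq_lintegral [IsFiniteMeasure P]
    {Y : Ω → α} {Z : Ω → β} (h : IndepFun Y Z P) (hY : Measurable Y) (hZ : Measurable Z)
    {S : Set (α × β)} (hS : MeasurableSet S) :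
    P {ω | (Y ω, Z ω) ∈ S} = ∫⁻ ω, P {ω' | (Y ω', Z ω) ∈ S} ∂P := by
  have hslice : ∀ z, P {ω' | (Y ω', z) ∈ S} = P.map Y ((fun y => (y, z)) ⁻¹' S) := fun z =>
    (Measure.map_apply hY (measurable_prodMk_right hS)).symm
  calc P {ω | (Y ω, Z ω) ∈ S} = (P.map Y).prod (P.map Z) S := by
        rw [← h.map_prod_eq_prod_map_map hY.aemeasurable hZ.aemeasurable,
          Measure.map_apply (hY.prodMk hZ) hS]
        rfl
    _ = ∫⁻ z, P.map Y ((fun y => (y, z)) ⁻¹' S) ∂(P.map Z) := Measure.prod_apply_symm hS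
    _ = ∫⁻ ω, P {ω' | (Y ω', Z ω) ∈ S} ∂P := by
        rw [lintegral_map (measurable_measure_prodMk_right hS) hZ]
        simp only [hslice]

theorem prod_measure_le_of_indepFun_of_ae [IsFiniteMeasure P] [Fintype ι]
    {X : ι → Ω → α} {V : ι → Ω → β}
    (hX : ∀ i, Measurable (X i)) (hV : ∀ i, Measurable (V i)) (hVindep : iIndepFun V P)
    (hXV : IndepFun (fun ω i => X i ω) (fun ω i => V i ω) P)
    {R : ι → Set (β × α)} (hR : ∀ i, MeasurableSet (R i))
    (h : ∀ᵐ ω ∂P,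
      ∏ i, P {ω' | (V i ω, X i ω') ∈ R i} ≤ P {ω' | ∀ i, (V i ω, X i ω') ∈ R i}) :
    ∏ i, P {ω | (V i ω, X i ω) ∈ R i} ≤ P {ω | ∀ i, (V i ω, X i ω) ∈ R i} := by
  have hXm : Measurable fun ω i => X i ω := measurable_pi_lambda _ hX
  have hVm : Measurable fun ω i => V i ω := measurable_pi_lambda _ hV
  have hRi : ∀ i, MeasurableSet {p : (ι → α) × (ι → β) | (p.2 i, p.1 i) ∈ R i} :=
    fun i => (((measurable_pi_apply i).comp measurable_snd).prodMk
      ((measurable_pi_apply i).comp measurable_fst)) (hR i)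
  have hq : ∀ i, Measurable fun t => P {ω' | (t, X i ω') ∈ R i} := fun i => by
    have hmap : (fun t => P {ω' | (t, X i ω') ∈ R i}) =
        fun t => P.map (X i) (Prod.mk t ⁻¹' R i) :=
      funext fun t => (Measure.map_apply (hX i) (measurable_prodMk_left (hR i))).symm
    exact hmap ▸ measurable_measure_prodMk_left (hR i)
  have hRall : MeasurableSet {p : (ι → α) × (ι → β) | ∀ i, (p.2 i, p.1 i) ∈ R i} := by
    simpa only [ofPred_forall] using MeasurableSet.iInter hRi
  calc ∏ i, P {ω | (V i ω, X i ω) ∈ R i}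
      = ∏ i, ∫⁻ ω, P {ω' | (V i ω, X i ω') ∈ R i} ∂P :=
        Finset.prod_congr rfl fun i _ => hXV.measure_prodMk_mem_eq_lintegral hXm hVm (hRi i)
    _ = ∫⁻ ω, ∏ i, P {ω' | (V i ω, X i ω') ∈ R i} ∂P :=
        (lintegral_prod_eq_prod_lintegral_of_indepFun _ _ (hVindep.comp _ hq)
          fun i => (hq i).comp (hV i)).symm
    _ ≤ ∫⁻ ω, P {ω' | ∀ i, (V i ω, X i ω') ∈ R i} ∂P := lintegral_mono_ae h
    _ = P {ω | ∀ i, (V i ω, X i ω) ∈ R i} :=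
        (hXV.measure_prodMk_mem_eq_lintegral hXm hVm hRall).symm

theorem iIndepFun_of_map_eq_pi [IsProbabilityMeasure P] [Fintype ι] {V : ι → Ω → β}
    (hV : ∀ i, Measurable (V i))
    {μ : ι → Measure β} [∀ i, IsProbabilityMeasure (μ i)]
    (h : P.map (fun ω i => V i ω) = Measure.pi μ) : iIndepFun V P := by
  rw [iIndepFun_iff_map_fun_eq_pi_map fun i => (hV i).aemeasurable, h]
  congr 1
  funext i
  rw [← (measurePreserving_eval μ i).map_eq, ← h,
    Measure.map_map (measurable_pi_apply i) (measurable_pi_lambda _ hV)]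
  rfl

end

theorem IsPOD.of_indepFun_of_ae {Ω : Type*} [MeasurableSpace Ω] {P : Measure Ω}
    [IsProbabilityMeasure P] {d : ℕ} {X V : Fin d → Ω → ℝ} (hX : ∀ i, Measurable (X i))
    (hV : ∀ i, Measurable (V i)) (hVindep : iIndepFun V P)
    (hXV : IndepFun (fun ω i => X i ω) (fun ω i => V i ω) P)
    {g : Fin d → ℝ → ℝ → ℝ} (hg : ∀ i, Measurable (Function.uncurry (g i)))
    (h : ∀ᵐ ω ∂P, IsPOD P fun i ω' => g i (V i ω) (X i ω')) :
    IsPOD P fun i ω => g i (V i ω) (X i ω) := fun u =>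
  ⟨prod_measure_le_of_indepFun_of_ae hX hV hVindep hXV (R := fun i => {p | g i p.1 p.2 ≤ u i})
      (fun i => measurableSet_le (hg i) measurable_const) (h.mono fun _ hω => (hω u).1),
    prod_measure_le_of_indepFun_of_ae hX hV hVindep hXV (R := fun i => {p | u i < g i p.1 p.2})
      (fun i => measurableSet_lt measurable_const (hg i)) (h.mono fun _ hω => (hω u).2)⟩

instance isProbabilityMeasure_volume_restrict_Icc_zero_one :
    IsProbabilityMeasure ((volume : Measure ℝ).restrict (Icc 0 1)) :=
  ⟨by simp⟩

theorem stmt13 {Ω : Type*} [MeasurableSpace Ω] (P : Measure Ω) [IsProbabilityMeasure P]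
    {d : ℕ} (X V : Fin d → Ω → ℝ)
    (hXm : ∀ i, Measurable (X i)) (hVm : ∀ i, Measurable (V i))
    (hV : Measure.map (fun ω i => V i ω) P
        = (volume : Measure (Fin d → ℝ)).restrict (Set.univ.pi fun _ => Set.Icc (0:ℝ) 1))
    (hindep : IndepFun (fun ω i => X i ω) (fun ω i => V i ω) P)
    (F Fm : Fin d → ℝ → ℝ)
    (hF : ∀ i x, F i x = (P {ω | X i ω ≤ x}).toReal)
    (hFm : ∀ i x, Fm i x = (P {ω | X i ω < x}).toReal)
    (U : Fin d → Ω → ℝ)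
    (hU : ∀ i ω, U i ω = Fm i (X i ω) + V i ω * (F i (X i ω) - Fm i (X i ω)))
    (hPOD : IsPOD P X) :
    IsPOD P U := by
  have hF_mono : ∀ i, Monotone (F i) := fun i a b hab => by
    rw [hF, hF]
    exact ENNReal.toReal_mono (measure_ne_top P _) (measure_mono fun ω hω => le_trans hω hab)
  have hFm_mono : ∀ i, Monotone (Fm i) := fun i a b hab => by
    rw [hFm, hFm]
    exact ENNReal.toReal_mono (measure_ne_top P _)
      (measure_mono fun ω hω => lt_of_lt_of_le hω hab)
  set G : Fin d → ℝ → ℝ → ℝ := fun i t x => Fm i x + t * (F i x - Fm i x)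
  have hG_mono : ∀ i, ∀ t ∈ Icc (0 : ℝ) 1, Monotone (G i t) := fun i t ht a b hab => by
    linarith [mul_le_mul_of_nonneg_left (hF_mono i hab) ht.1,
      mul_le_mul_of_nonneg_left (hFm_mono i hab) (sub_nonneg.2 ht.2)]
  have hG_meas : ∀ i, Measurable (Function.uncurry (G i)) := fun i => by
    have := (hF_mono i).measurable
    have := (hFm_mono i).measurable
    fun_prop
  have hVindep : iIndepFun V P :=
    iIndepFun_of_map_eq_pi hVm (by rw [hV, volume_pi, Measure.restrict_pi_pi])
  have hV_mem : ∀ᵐ ω ∂P, ∀ i, V i ω ∈ Icc (0 : ℝ) 1 := by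
    have hbox : ∀ᵐ v ∂(P.map fun ω i => V i ω), v ∈ univ.pi fun _ => Icc (0 : ℝ) 1 := by
      rw [hV]
      exact ae_restrict_mem (MeasurableSet.univ_pi fun _ => measurableSet_Icc)
    exact (ae_of_ae_map (measurable_pi_lambda _ hVm).aemeasurable hbox).mono
      fun ω hω i => hω i (mem_univ i)
  have hU_eq : U = fun i ω => G i (V i ω) (X i ω) := funext fun i => funext (hU i)
  rw [hU_eq]
  exact IsPOD.of_indepFun_of_ae hXm hVm hVindep hindep hG_meas
    (hV_mem.mono fun ω hω => hPOD.comp_monotone hXm fun i => hG_mono i _ (hω i))
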